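/- arXiv:2005.01154 — 7 statements merged into one kernel-verified Lean document; each statement's English description precedes it below -/
import Mathlib

section
/- Let D(z) be a Hasse–Schmidt derivation on the exterior algebra ⋀V (i.e. D(z)(u∧v) = D(z)u ∧ D(z)v) whose constant term D_0 is the identity, and let D̄(z) be its inverse formal power series in End(⋀V)[[z]]. Then the integration by parts formula holds: D(z)(D̄(z)u ∧ v) = u ∧ D(z)v for all u, v ∈ ⋀V. -/
noncomputable section
open Finset

variable {W : Type} [AddCommGroup W] [Module ℚ W]

/-- apply a formal power series of endomorphisms of `⋀W` to a single element,
obtaining a formal power series `D(z)u` with coefficients in `⋀W`. -/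
def applyPS (D : PowerSeries (Module.End ℚ (ExteriorAlgebra ℚ W)))
    (u : ExteriorAlgebra ℚ W) : PowerSeries (ExteriorAlgebra ℚ W) :=
  PowerSeries.mk fun n => (PowerSeries.coeff n D) u

/-- the `z`-linear extension of `D(z)` to power series with coefficients in `⋀W`
(Cauchy product of the coefficients). -/
def actPS (D : PowerSeries (Module.End ℚ (ExteriorAlgebra ℚ W)))
    (f : PowerSeries (ExteriorAlgebra ℚ W)) : PowerSeries (ExteriorAlgebra ℚ W) :=
  PowerSeries.mk fun n =>
    ∑ p ∈ Finset.HasAntidiagonal.antidiagonal n, (PowerSeries.coeff p.1 D) ((PowerSeries.coeff p.2 f))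


/-! Write `R_w` for right multiplication by `w`, and `R_w(z)` for its coefficientwise extension to
a series `w(z)`. In the ring `End(⋀W)[[z]]` the Hasse–Schmidt property of `D(z)` reads
`D(z) ∘ R_v = R_{D(z)v}(z) ∘ D(z)`, and applying `D(z)` to `E(z)u` is applying `D(z) ∘ E(z)`.
Hence `D(z)(D̄(z)u ∧ v) = (D(z) ∘ R_v ∘ D̄(z)) u = (R_{D(z)v}(z) ∘ D(z) ∘ D̄(z)) u = u ∧ D(z)v`. -/

open PowerSeries

def mulRightPS (w : PowerSeries (ExteriorAlgebra ℚ W)) :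
    PowerSeries (Module.End ℚ (ExteriorAlgebra ℚ W)) :=
  mk fun n => LinearMap.mulRight ℚ (coeff n w)

theorem mulRightPS_C (v : ExteriorAlgebra ℚ W) :
    mulRightPS (C v) = C (LinearMap.mulRight ℚ v) := by
  ext n : 1
  rw [mulRightPS, coeff_mk, coeff_C, coeff_C]
  split_ifs <;> simp

theorem applyPS_one (u : ExteriorAlgebra ℚ W) : applyPS 1 u = C u := by
  ext n
  rw [applyPS, coeff_mk, coeff_one, coeff_C]
  split_ifs <;> simp

theorem applyPS_mulRightPS_mul (w : PowerSeries (ExteriorAlgebra ℚ W))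
    (E : PowerSeries (Module.End ℚ (ExteriorAlgebra ℚ W))) (u : ExteriorAlgebra ℚ W) :
    applyPS (mulRightPS w * E) u = applyPS E u * w := by
  ext n
  rw [applyPS, coeff_mk, coeff_mul, coeff_mul, ← Nat.sum_antidiagonal_swap]
  simp only [applyPS, mulRightPS, coeff_mk, Prod.fst_swap, Prod.snd_swap, LinearMap.sum_apply,
    Module.End.mul_apply, LinearMap.mulRight_apply]

theorem actPS_applyPS (D E : PowerSeries (Module.End ℚ (ExteriorAlgebra ℚ W)))
    (u : ExteriorAlgebra ℚ W) : actPS D (applyPS E u) = applyPS (D * E) u := by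
  ext n
  simp only [actPS, applyPS, coeff_mk, coeff_mul, LinearMap.sum_apply, Module.End.mul_apply]

theorem mul_mulRightPS_C {D : PowerSeries (Module.End ℚ (ExteriorAlgebra ℚ W))}
    (hHS : ∀ u v : ExteriorAlgebra ℚ W, applyPS D (u * v) = applyPS D u * applyPS D v)
    (v : ExteriorAlgebra ℚ W) :
    D * mulRightPS (C v) = mulRightPS (applyPS D v) * D := by
  ext n : 1
  refine LinearMap.ext fun x => ?_
  have hHS_coeff := congrArg (coeff n) (hHS x v)
  rw [mulRightPS_C, coeff_mul_C, coeff_mul, ← Nat.sum_antidiagonal_swap]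
  simpa only [applyPS, mulRightPS, coeff_mk, coeff_mul, Prod.fst_swap, Prod.snd_swap,
    LinearMap.sum_apply, Module.End.mul_apply, LinearMap.mulRight_apply] using hHS_coeff

theorem integration_by_parts_general
    (D Dbar : PowerSeries (Module.End ℚ (ExteriorAlgebra ℚ W)))
    (hHS : ∀ u v : ExteriorAlgebra ℚ W, applyPS D (u * v) = applyPS D u * applyPS D v)
    (hinv₁ : D * Dbar = 1) (u v : ExteriorAlgebra ℚ W) :
    actPS D (applyPS Dbar u * PowerSeries.C v)
      = PowerSeries.C u * applyPS D v := by
  calc actPS D (applyPS Dbar u * C v)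
      = applyPS (D * mulRightPS (C v) * Dbar) u := by
        rw [← applyPS_mulRightPS_mul, actPS_applyPS, mul_assoc]
    _ = applyPS (mulRightPS (applyPS D v) * (D * Dbar)) u := by
        rw [mul_mulRightPS_C hHS, mul_assoc]
    _ = C u * applyPS D v := by
        rw [hinv₁, applyPS_mulRightPS_mul, applyPS_one]

/-- integration by parts: if `D(z)` is a Hasse–Schmidt derivation on `⋀W`
with `D₀ = id` and inverse power series `D̄(z)`, then
`D(z)(D̄(z)u ∧ v) = u ∧ D(z)v` for all `u, v ∈ ⋀W`. -/
theorem integration_by_parts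
    (D Dbar : PowerSeries (Module.End ℚ (ExteriorAlgebra ℚ W)))
    (hHS : ∀ u v : ExteriorAlgebra ℚ W, applyPS D (u * v) = applyPS D u * applyPS D v)
    (h0 : PowerSeries.constantCoeff D = 1)
    (hinv₁ : D * Dbar = 1) (hinv₂ : Dbar * D = 1) (u v : ExteriorAlgebra ℚ W) :
    actPS D (applyPS Dbar u * PowerSeries.C v)
      = PowerSeries.C u * applyPS D v :=
  integration_by_parts_general D Dbar hHS hinv₁ u v
end
end

section
/- With V = ⊕_{i≥0} Q·b_i and the Schubert derivations σ_+(z), σ̄_-(w) acting on ⋀V, for any partition λ of length exactly r (i.e. λ_r > 0) one has σ̄_-(w) σ_+(z) [b]^r_λ = σ_+(z) σ̄_-(w) [b]^r_λ, where [b]^r_λ = b_{r-1+λ_1} ∧ ⋯ ∧ b_{λ_r}. -/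
noncomputable section
open Finset

abbrev Vb : Type := ℕ →₀ ℚ
abbrev ExtV : Type := ExteriorAlgebra ℚ Vb

/-- basis vectors `b_i` inside the exterior algebra -/
def bv (i : ℕ) : ExtV := ExteriorAlgebra.ι ℚ (Finsupp.single i (1:ℚ))

/-- the family of coefficients of a Hasse–Schmidt derivation with `D 0` acting as
the identity on scalars -/
def IsHSFamily (D : ℕ → Module.End ℚ ExtV) : Prop :=
  (∀ (i : ℕ) (u v : ExtV), D i (u * v) = ∑ p ∈ Finset.HasAntidiagonal.antidiagonal i, D p.1 u * D p.2 v) ∧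
  (∀ i : ℕ, D i (1 : ExtV) = if i = 0 then 1 else 0)

/-- `σ₊(z)`, via `σ₊(z) b_j = ∑_i b_{j+i} z^i` -/
def IsSigmaPlus (D : ℕ → Module.End ℚ ExtV) : Prop :=
  IsHSFamily D ∧ ∀ i j : ℕ, D i (bv j) = bv (j + i)

/-- `σ₋(w)` (coefficients of `w^{-i}`), via `σ₋(w) b_j = ∑_i b_{j-i} w^{-i}` -/
def IsSigmaMinus (D : ℕ → Module.End ℚ ExtV) : Prop :=
  IsHSFamily D ∧ ∀ i j : ℕ, D i (bv j) = if i ≤ j then bv (j - i) else 0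

/-- `σ̄₊(z)`, via `σ̄₊(z) b_j = b_j - b_{j+1} z` -/
def IsSigmaBarPlus (D : ℕ → Module.End ℚ ExtV) : Prop :=
  IsHSFamily D ∧ ∀ i j : ℕ, D i (bv j) =
    if i = 0 then bv j else if i = 1 then -bv (j+1) else 0

/-- `σ̄₋(w)` (coefficients of `w^{-i}`), via `σ̄₋(w) b_j = b_j - b_{j-1} w^{-1}`, `b_{-1}=0` -/
def IsSigmaBarMinus (D : ℕ → Module.End ℚ ExtV) : Prop :=
  IsHSFamily D ∧ ∀ i j : ℕ, D i (bv j) =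
    if i = 0 then bv j else if i = 1 then (if j = 0 then 0 else -bv (j-1)) else 0

/-- `[b]^r_λ = b_{r-1+λ₁} ∧ ⋯ ∧ b_{λ_r}` -/
def wedgeB (r : ℕ) (lam : Fin r → ℕ) : ExtV :=
  (List.ofFn fun i : Fin r => bv ((r - 1 - (i : ℕ)) + lam i)).prod

/-- the dual basis element `β_j ∈ V*` -/
def betaF (j : ℕ) : Module.Dual ℚ Vb := Finsupp.lapply j

/-- contraction `β_j ⌟ ·` on the exterior algebra -/
def ctr (j : ℕ) : ExtV →ₗ[ℚ] ExtV :=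
  CliffordAlgebra.contractLeft (Q := (0 : QuadraticForm ℚ Vb)) (betaF j)


/- Both `σ₊(z)` and `σ̄₋(w)` are Hasse–Schmidt derivations, so the coefficients of
`σ̄₋(w) σ₊(z)` and of `σ₊(z) σ̄₋(w)` both act on a product through the Leibniz rule
for the product series; hence two such families that commute on every factor of a wedge
monomial commute on the monomial. On a single `b_a` both composites give
`∑ᵢ (b_{a+i} - b_{a+i-1} w⁻¹) zⁱ`, as long as `a ≥ 1`: for `a = 0` the truncation
`b_{-1} = 0` is met only by `σ̄₋(w) b_0`, not by `σ̄₋(w) b_i` with `i > 0`. This is why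
all parts of `λ` must be positive. -/

namespace IsHSFamily

variable {D E : ℕ → Module.End ℚ ExtV}

theorem commute_one (hD : IsHSFamily D) (hE : IsHSFamily E) (i j : ℕ) :
    D i (E j 1) = E j (D i 1) := by
  rw [hD.2, hE.2]
  split_ifs <;> simp [hD.2, hE.2, *]

theorem commute_mul (hD : IsHSFamily D) (hE : IsHSFamily E) {u v : ExtV}
    (hu : ∀ i j, D i (E j u) = E j (D i u)) (hv : ∀ i j, D i (E j v) = E j (D i v))
    (i j : ℕ) : D i (E j (u * v)) = E j (D i (u * v)) := by
  simp only [hE.1, hD.1, map_sum]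
  rw [Finset.sum_comm]
  refine Finset.sum_congr rfl fun q _ => Finset.sum_congr rfl fun p _ => ?_
  rw [hu, hv]

theorem commute_list_prod (hD : IsHSFamily D) (hE : IsHSFamily E) (l : List ExtV)
    (hl : ∀ u ∈ l, ∀ i j, D i (E j u) = E j (D i u)) (i j : ℕ) :
    D i (E j l.prod) = E j (D i l.prod) := by
  induction l generalizing i j with
  | nil => exact hD.commute_one hE i j
  | cons u l ih =>
    rw [List.prod_cons]
    exact hD.commute_mul hE (hl u List.mem_cons_self)
      (ih fun v hv => hl v (List.mem_cons_of_mem u hv)) i j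

end IsHSFamily

theorem sigmaBarMinus_sigmaPlus_commute_bv {Sp Sbm : ℕ → Module.End ℚ ExtV}
    (hSp : IsSigmaPlus Sp) (hSbm : IsSigmaBarMinus Sbm) {a : ℕ} (ha : a ≠ 0) (i j : ℕ) :
    Sbm i (Sp j (bv a)) = Sp j (Sbm i (bv a)) := by
  rw [hSp.2, hSbm.2, hSbm.2]
  rcases i with _ | _ | i
  · simp [hSp.2]
  · have hshift : a + j - 1 = a - 1 + j := by omega
    simp [ha, hSp.2, hshift]
  · simp

theorem sbarMinus_sigmaPlus_commute_on_full_length_general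
    (r : ℕ) (lam : Fin r → ℕ) (hpos : ∀ i : Fin r, 0 < lam i)
    (Sp Sbm : ℕ → Module.End ℚ ExtV)
    (hSp : IsSigmaPlus Sp) (hSbm : IsSigmaBarMinus Sbm) :
    ∀ m n : ℕ, Sbm m (Sp n (wedgeB r lam)) = Sp n (Sbm m (wedgeB r lam)) := by
  refine hSbm.1.commute_list_prod hSp.1 _ fun u hu => ?_
  obtain ⟨k, rfl⟩ := List.mem_ofFn.mp hu
  exact sigmaBarMinus_sigmaPlus_commute_bv hSp hSbm (by have := hpos k; omega)

/-- if `λ` has length exactly `r` (all parts positive) then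
`σ̄₋(w) σ₊(z) [b]^r_λ = σ₊(z) σ̄₋(w) [b]^r_λ`, coefficientwise in `z^n w^{-m}`. -/
theorem sbarMinus_sigmaPlus_commute_on_full_length
    (r : ℕ) (lam : Fin r → ℕ) (hlam : Antitone lam) (hpos : ∀ i : Fin r, 0 < lam i)
    (Sp Sbm : ℕ → Module.End ℚ ExtV)
    (hSp : IsSigmaPlus Sp) (hSbm : IsSigmaBarMinus Sbm) :
    ∀ m n : ℕ, Sbm m (Sp n (wedgeB r lam)) = Sp n (Sbm m (wedgeB r lam)) :=
  sbarMinus_sigmaPlus_commute_on_full_length_general r lam hpos Sp Sbm hSp hSbm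
end
end

section
/- Let β(w^{-1}) = ∑_{j≥0} β_j w^{-j} be the generating series of the dual basis, acting on ⋀V by contraction. Then for every u ∈ ⋀^r V, β(w^{-1}) ⌟ σ̄_+(z) u = (1 − z/w) σ̄_+(z)(β(w^{-1}) ⌟ u). -/
noncomputable section
open Finset

/-! `σ̄₊(z)` is multiplicative and sends a vector `v` to `v - z · shift v`, while `β(t) ⌟` is an
odd derivation with `β(t)(shift v) = t · β(t)(v)`. Hence in `β(t) ⌟ σ̄₊(z) (v ∧ y)` the terms coming
from the shift contribute exactly the factor `1 - z t`, the identity passes from `y` to `v ∧ y`,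
and by induction on the number of vector factors it holds on all of `⋀ V`. -/

def shiftV : Vb →ₗ[ℚ] Vb := Finsupp.lmapDomain ℚ ℚ Nat.succ

lemma betaF_zero_shiftV (v : Vb) : betaF 0 (shiftV v) = 0 :=
  Finsupp.mapDomain_of_notMem_range v 0 (by simp)

lemma betaF_succ_shiftV (m : ℕ) (v : Vb) : betaF (m + 1) (shiftV v) = betaF m v :=
  Finsupp.mapDomain_apply Nat.succ_injective v m

lemma ctr_algebraMap (m : ℕ) (q : ℚ) : ctr m (algebraMap ℚ ExtV q) = 0 :=
  CliffordAlgebra.contractLeft_algebraMap _ _ q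

lemma ctr_ι_mul (m : ℕ) (v : Vb) (x : ExtV) :
    ctr m (ExteriorAlgebra.ι ℚ v * x) = betaF m v • x - ExteriorAlgebra.ι ℚ v * ctr m x :=
  CliffordAlgebra.contractLeft_ι_mul _ v x

namespace IsSigmaBarPlus

variable {D : ℕ → Module.End ℚ ExtV}

lemma apply_algebraMap (hD : IsSigmaBarPlus D) (n : ℕ) (q : ℚ) :
    D n (algebraMap ℚ ExtV q) = if n = 0 then algebraMap ℚ ExtV q else 0 := by
  rw [Algebra.algebraMap_eq_smul_one, map_smul, hD.1.2]
  split_ifs <;> simp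

lemma apply_ι (hD : IsSigmaBarPlus D) (n : ℕ) (v : Vb) :
    D n (ExteriorAlgebra.ι ℚ v) =
      if n = 0 then ExteriorAlgebra.ι ℚ v
      else if n = 1 then -ExteriorAlgebra.ι ℚ (shiftV v) else 0 := by
  induction v using Finsupp.induction_linear with
  | zero => split_ifs <;> simp
  | add f g hf hg => split_ifs at * <;> simp only [map_add, hf, hg, neg_add, add_zero]
  | single j c =>
    rw [← Finsupp.smul_single_one, map_smul, map_smul, map_smul, ← bv, hD.2]
    split_ifs <;> simp [bv, shiftV, ← map_smul]

lemma apply_ι_mul (hD : IsSigmaBarPlus D) (n : ℕ) (v : Vb) (x : ExtV) :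
    D n (ExteriorAlgebra.ι ℚ v * x) = ExteriorAlgebra.ι ℚ v * D n x -
      if n = 0 then 0 else ExteriorAlgebra.ι ℚ (shiftV v) * D (n - 1) x := by
  rw [hD.1.1, Finset.Nat.sum_antidiagonal_eq_sum_range_succ_mk]
  rcases n with _ | n
  · simp [hD.apply_ι]
  · rw [Finset.sum_range_succ', Finset.sum_range_succ']
    simp [hD.apply_ι, Finset.sum_eq_zero, sub_eq_add_neg, add_comm]

/-- Coefficientwise form of `β(t) ⌟ σ̄₊(z) x = (1 - z t) σ̄₊(z) (β(t) ⌟ x)`. -/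
lemma ctr_apply (hD : IsSigmaBarPlus D) (x : ExtV) (n m : ℕ) :
    ctr m (D n x) = D n (ctr m x) -
      if n = 0 ∨ m = 0 then 0 else D (n - 1) (ctr (m - 1) x) := by
  induction x using CliffordAlgebra.left_induction generalizing n m with
  | algebraMap q => simp [hD.apply_algebraMap, ctr_algebraMap, apply_ite]
  | add x y hx hy => simp only [map_add, hx, hy]; split_ifs <;> abel
  | ι_mul x v ih =>
    rcases n with _ | n
    · simp [hD.apply_ι_mul, ctr_ι_mul, ih]
    rcases m with _ | m
    · simp only [hD.apply_ι_mul, ctr_ι_mul, ih, betaF_zero_shiftV, map_sub, map_smul,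
        Nat.add_eq_zero_iff, one_ne_zero, and_false, ↓reduceIte, add_tsub_cancel_right, or_true,
        sub_zero, zero_smul, zero_sub, sub_neg_eq_add]
      abel
    · simp only [hD.apply_ι_mul, ctr_ι_mul, ih, betaF_succ_shiftV, map_sub, map_smul, mul_sub,
        mul_ite, mul_zero, Nat.add_eq_zero_iff, one_ne_zero, and_false, ↓reduceIte,
        add_tsub_cancel_right, or_self, or_false]
      abel

end IsSigmaBarPlus

lemma PowerSeries.coeff_coeff_one_sub_X_mul_C_X_mul {R : Type*} [Ring R]
    (f : PowerSeries (PowerSeries R)) (n m : ℕ) :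
    coeff m (coeff n ((1 - X * C X) * f)) =
      coeff m (coeff n f) - if n = 0 ∨ m = 0 then 0 else coeff (m - 1) (coeff (n - 1) f) := by
  rw [sub_mul, one_mul, mul_assoc, map_sub, map_sub]
  rcases n with _ | n <;> rcases m with _ | m <;> simp [coeff_succ_X_mul, coeff_C_mul]

/-- The power series variable `z` is the outer one and `t = w⁻¹` the inner one. -/
theorem beta_series_contraction_sbarPlus_general
    (Sbp : ℕ → Module.End ℚ ExtV) (hSbp : IsSigmaBarPlus Sbp)
    (u : ExtV) :
    (PowerSeries.mk fun n => PowerSeries.mk fun m => ctr m (Sbp n u)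
      : PowerSeries (PowerSeries ExtV))
    = (1 - PowerSeries.X * PowerSeries.C (R := PowerSeries ExtV) PowerSeries.X) *
        PowerSeries.mk fun n => PowerSeries.mk fun m => Sbp n (ctr m u) := by
  ext n m
  rw [PowerSeries.coeff_coeff_one_sub_X_mul_C_X_mul]
  simpa using hSbp.ctr_apply u n m

/-- `β(w^{-1}) ⌟ σ̄₊(z) u = (1 - z/w) σ̄₊(z) (β(w^{-1}) ⌟ u)` for
`u ∈ ⋀^r V`.  The outer power series variable is `z`, the inner one is `t = w^{-1}`,
and the coefficient of `t^m` in `β(w^{-1}) ⌟ ·` is the contraction `β_m ⌟ ·`. -/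
theorem beta_series_contraction_sbarPlus
    (Sbp : ℕ → Module.End ℚ ExtV) (hSbp : IsSigmaBarPlus Sbp)
    (r : ℕ) (u : ExtV)
    (hu : u ∈ (LinearMap.range (ExteriorAlgebra.ι ℚ : Vb →ₗ[ℚ] ExtV)) ^ r) :
    (PowerSeries.mk fun n => PowerSeries.mk fun m => ctr m (Sbp n u)
      : PowerSeries (PowerSeries ExtV))
    = (1 - PowerSeries.X * PowerSeries.C (R := PowerSeries ExtV) PowerSeries.X) *
        PowerSeries.mk fun n => PowerSeries.mk fun m => Sbp n (ctr m u) :=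
  beta_series_contraction_sbarPlus_general Sbp hSbp u
end
end

section
/- For every u ∈ ⋀^r V, the identity β(w^{-1}) ⌟ u = σ̄_-(w)(β_0 ⌟ σ_-(w) u) holds, where β(w^{-1}) = ∑_{j≥0} β_j w^{-j}. -/
noncomputable section
open Finset

/-!
Write `σ₋ = ∑ σ₋ᵢ tⁱ`, `σ̄₋ = ∑ σ̄₋ᵢ tⁱ` and `β(t)⌟ = ∑ (β_j⌟) tʲ` as power series with coefficients
in `End(⋀V)`; the claim is the coefficientwise form of `β(t)⌟ = σ̄₋ ∘ β₀⌟ ∘ σ₋`. It follows from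
`σ̄₋ σ₋ = 1` and `β₀⌟ ∘ σ₋ = σ₋ ∘ β(t)⌟`.

The product of two Hasse–Schmidt derivations is again one, and a Hasse–Schmidt derivation is
determined by its values on the `b_j`; since `σ̄₋ σ₋` fixes every `b_j`, it is the identity.

For the second identity, `σ₋` maps `v ∈ V` to `∑ (shifted v) tⁱ` and `β₀⌟`, `β(t)⌟` are
antiderivations, so the difference `Φ` of the two sides kills `1` and anticommutes with left
multiplication by `v`: `Φ ∘ (v ∧ ·) = -Λ_v ∘ Φ`. Hence `Φ` vanishes on every product of vectors.
-/

open PowerSeries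

theorem Finset.Nat.sum_antidiagonal_antidiagonal_add_add_add_comm {M : Type*} [AddCommMonoid M]
    (n : ℕ) (f : ℕ → ℕ → ℕ → ℕ → M) :
    ∑ p ∈ antidiagonal n, ∑ q ∈ antidiagonal p.1, ∑ s ∈ antidiagonal p.2, f q.1 q.2 s.1 s.2 =
      ∑ p ∈ antidiagonal n, ∑ q ∈ antidiagonal p.1, ∑ s ∈ antidiagonal p.2,
        f q.1 s.1 q.2 s.2 := by
  simp only [← Finset.sum_product', Finset.sum_sigma']
  let e (x : Σ _ : ℕ × ℕ, (ℕ × ℕ) × (ℕ × ℕ)) : Σ _ : ℕ × ℕ, (ℕ × ℕ) × (ℕ × ℕ) :=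
    ⟨(x.2.1.1 + x.2.2.1, x.2.1.2 + x.2.2.2), (x.2.1.1, x.2.2.1), (x.2.1.2, x.2.2.2)⟩
  refine Finset.sum_nbij' e e ?_ ?_ ?_ ?_ fun _ _ => rfl <;>
    rintro ⟨⟨a, b⟩, ⟨c, d⟩, ⟨g, h⟩⟩ <;>
    simp +contextual only [mem_sigma, HasAntidiagonal.mem_antidiagonal, mem_product, and_imp,
      and_true, implies_true, e] <;>
    omega

theorem PowerSeries.commute_map_algebraMap {R A : Type*} [CommSemiring R] [Semiring A]
    [Algebra R A] (f : R⟦X⟧) (F : A⟦X⟧) : Commute (map (algebraMap R A) f) F := by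
  ext n
  rw [coeff_mul, coeff_mul, ← Finset.Nat.sum_antidiagonal_swap]
  exact Finset.sum_congr rfl fun p _ => by simp [Algebra.commutes]

theorem PowerSeries.coeff_mk_mul_mk_apply {R M : Type*} [CommSemiring R] [AddCommMonoid M]
    [Module R M] (D E : ℕ → Module.End R M) (n : ℕ) (u : M) :
    coeff n (PowerSeries.mk D * PowerSeries.mk E) u = ∑ p ∈ antidiagonal n, D p.1 (E p.2 u) := by
  simp [coeff_mul, LinearMap.sum_apply]

theorem PowerSeries.eq_zero_of_mul_C_mulLeft_ι {R M : Type*} [CommRing R] [AddCommGroup M]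
    [Module R M] {Q : QuadraticForm R M} {Φ : (Module.End R (CliffordAlgebra Q))⟦X⟧}
    (h_one : ∀ n, coeff n Φ 1 = 0)
    (h_ι : ∀ v, ∃ Λ, Φ * C (LinearMap.mulLeft R (CliffordAlgebra.ι Q v)) + Λ * Φ = 0) :
    Φ = 0 := by
  refine PowerSeries.ext fun n => LinearMap.ext fun u => ?_
  induction u using CliffordAlgebra.left_induction generalizing n with
  | algebraMap r => simp [Algebra.algebraMap_eq_smul_one, h_one]
  | add x y hx hy => simp [hx, hy]
  | ι_mul x v hx =>
    obtain ⟨Λ, hΛ⟩ := h_ι v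
    have := congrArg (fun F : (Module.End R (CliffordAlgebra Q))⟦X⟧ => coeff n F x) hΛ
    rw [map_add, coeff_mul_C, coeff_mul] at this
    simpa [LinearMap.sum_apply, hx] using this

namespace IsHSFamily

variable {D E : ℕ → Module.End ℚ ExtV}

theorem apply_algebraMap (hD : IsHSFamily D) (i : ℕ) (q : ℚ) :
    D i (algebraMap ℚ ExtV q) = if i = 0 then algebraMap ℚ ExtV q else 0 := by
  rw [Algebra.algebraMap_eq_smul_one, map_smul, hD.2]
  split_ifs <;> simp

theorem ext (hD : IsHSFamily D) (hE : IsHSFamily E) (h : ∀ i k, D i (bv k) = E i (bv k)) :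
    D = E := by
  have hι (i : ℕ) : D i ∘ₗ ExteriorAlgebra.ι ℚ = E i ∘ₗ ExteriorAlgebra.ι ℚ :=
    Finsupp.lhom_ext' fun k => LinearMap.ext_ring (h i k)
  funext i
  refine LinearMap.ext fun u => ?_
  induction u using ExteriorAlgebra.induction generalizing i with
  | algebraMap q => rw [hD.apply_algebraMap, hE.apply_algebraMap]
  | ι v => exact LinearMap.congr_fun (hι i) v
  | mul a b ha hb => simp only [hD.1, hE.1, ha, hb]
  | add a b ha hb => rw [map_add, map_add, ha, hb]

theorem one : IsHSFamily fun n => coeff n (1 : (Module.End ℚ ExtV)⟦X⟧) := by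
  refine ⟨fun i u v => ?_, fun i => ?_⟩
  · rw [Finset.sum_eq_single (0, i)]
    · rcases i with _ | i <;> simp [coeff_one]
    · rintro ⟨a, b⟩ hab hne
      rcases Nat.eq_zero_or_pos a with rfl | ha
      · simp_all
      · simp [coeff_one, ha.ne']
    · simp
  · split_ifs <;> simp_all [coeff_one]

theorem mul (hD : IsHSFamily D) (hE : IsHSFamily E) :
    IsHSFamily fun n => coeff n (PowerSeries.mk D * PowerSeries.mk E) := by
  refine ⟨fun i u v => ?_, fun i => ?_⟩
  · simp only [coeff_mk_mul_mk_apply, hE.1, map_sum, hD.1, Finset.sum_mul_sum]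
    rw [← Finset.Nat.sum_antidiagonal_antidiagonal_add_add_add_comm i
      fun a b c d => D a (E c u) * D b (E d v)]
    exact Finset.sum_congr rfl fun p _ => Finset.sum_comm
  · rw [coeff_mk_mul_mk_apply, Finset.sum_eq_single (i, 0)]
    · rw [hE.2, if_pos rfl, hD.2]
    · rintro ⟨a, b⟩ hab hne
      rw [hE.2, if_neg, map_zero]
      rintro rfl
      simp_all
    · simp

theorem mk_mul_C_mulLeft (hD : IsHSFamily D) (u : ExtV) :
    PowerSeries.mk D * C (LinearMap.mulLeft ℚ u) =
      PowerSeries.mk (fun c => LinearMap.mulLeft ℚ (D c u)) * PowerSeries.mk D :=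
  PowerSeries.ext fun n => LinearMap.ext fun x => by
    rw [coeff_mul_C, coeff_mul]
    simp only [coeff_mk, Module.End.mul_apply, LinearMap.sum_apply, LinearMap.mulLeft_apply, hD.1]

end IsHSFamily

theorem IsSigmaBarMinus.mk_mul_mk_eq_one {Sm Sbm : ℕ → Module.End ℚ ExtV}
    (hSbm : IsSigmaBarMinus Sbm) (hSm : IsSigmaMinus Sm) :
    PowerSeries.mk Sbm * PowerSeries.mk Sm = 1 := by
  suffices h : (fun n => coeff n (PowerSeries.mk Sbm * PowerSeries.mk Sm)) = fun n => coeff n 1 from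
    PowerSeries.ext (congrFun h)
  refine (hSbm.1.mul hSm.1).ext IsHSFamily.one fun i k => ?_
  rw [coeff_mk_mul_mk_apply, coeff_one]
  rcases i with _ | m
  · simp [hSm.2, hSbm.2]
  -- only the coefficients `σ̄₋ 0` and `σ̄₋ 1` contribute
  rw [Finset.Nat.sum_antidiagonal_succ, Finset.sum_eq_single (0, m)]
  · obtain hmk | rfl | hkm := lt_trichotomy m k
    · have hk : k - m - 1 = k - (m + 1) := by omega
      simp [hSm.2, hSbm.2, hmk, hmk.le, hk, Nat.sub_ne_zero_of_lt hmk]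
    · simp [hSm.2, hSbm.2]
    · simp [hSm.2, hkm.not_ge, (hkm.trans (Nat.lt_succ_self m)).not_ge]
  · rintro ⟨a, b⟩ hab hne
    rw [HasAntidiagonal.mem_antidiagonal] at hab
    rcases Nat.eq_zero_or_pos a with rfl | ha
    · simp_all
    · simp [hSm.2, hSbm.2, apply_ite, ha.ne']
  · simp

def shiftDown (a : ℕ) : Vb →ₗ[ℚ] Vb :=
  Finsupp.lcomapDomain (· + a) (add_left_injective a)

theorem betaF_zero_shiftDown (a : ℕ) (v : Vb) : betaF 0 (shiftDown a v) = betaF a v :=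
  congrArg v (zero_add a)

theorem shiftDown_single (a k : ℕ) :
    shiftDown a (Finsupp.single k 1) = if a ≤ k then Finsupp.single (k - a) 1 else 0 := by
  split_ifs with h
  · obtain ⟨j, rfl⟩ := Nat.exists_eq_add_of_le' h
    rw [Nat.add_sub_cancel]
    exact Finsupp.comapDomain_single (· + a) j 1 _
  · ext n
    simp only [shiftDown, Finsupp.lcomapDomain_apply, Finsupp.comapDomain_apply,
      Finsupp.single_apply, Finsupp.coe_zero, Pi.zero_apply, ite_eq_right_iff]
    omega

theorem IsSigmaMinus.apply_ι {Sm : ℕ → Module.End ℚ ExtV} (hSm : IsSigmaMinus Sm) (a : ℕ)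
    (v : Vb) : Sm a (ExteriorAlgebra.ι ℚ v) = ExteriorAlgebra.ι ℚ (shiftDown a v) := by
  suffices Sm a ∘ₗ ExteriorAlgebra.ι ℚ = ExteriorAlgebra.ι ℚ ∘ₗ shiftDown a from
    LinearMap.congr_fun this v
  refine Finsupp.lhom_ext' fun k => LinearMap.ext_ring ?_
  simp only [LinearMap.comp_apply, Finsupp.lsingle_apply, shiftDown_single]
  exact (hSm.2 a k).trans (by split_ifs <;> simp [bv])

theorem ctr_mul_mulLeft_ι (j : ℕ) (v : Vb) :
    ctr j * LinearMap.mulLeft ℚ (ExteriorAlgebra.ι ℚ v) =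
      algebraMap ℚ (Module.End ℚ ExtV) (betaF j v) -
        LinearMap.mulLeft ℚ (ExteriorAlgebra.ι ℚ v) * ctr j :=
  LinearMap.ext fun x => (CliffordAlgebra.contractLeft_ι_mul (betaF j) v x).trans <| by
    simp only [LinearMap.sub_apply, Module.algebraMap_end_apply, Module.End.mul_apply,
      LinearMap.mulLeft_apply]
    rfl

/-- `β(t)` evaluated at `v`. -/
def betaSeries (v : Vb) : ℚ⟦X⟧ := PowerSeries.mk fun j => betaF j v

theorem mk_ctr_mul_C_mulLeft_ι (v : Vb) :
    PowerSeries.mk ctr * C (LinearMap.mulLeft ℚ (ExteriorAlgebra.ι ℚ v)) =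
      map (algebraMap ℚ (Module.End ℚ ExtV)) (betaSeries v) -
        C (LinearMap.mulLeft ℚ (ExteriorAlgebra.ι ℚ v)) * PowerSeries.mk ctr := by
  ext n : 1
  simp [coeff_mul_C, coeff_C_mul, betaSeries, ctr_mul_mulLeft_ι]

theorem C_ctr_zero_mul_mk_mulLeft_ι_shiftDown (v : Vb) :
    C (ctr 0) *
        PowerSeries.mk (fun c => LinearMap.mulLeft ℚ (ExteriorAlgebra.ι ℚ (shiftDown c v))) =
      map (algebraMap ℚ (Module.End ℚ ExtV)) (betaSeries v) -
        PowerSeries.mk (fun c => LinearMap.mulLeft ℚ (ExteriorAlgebra.ι ℚ (shiftDown c v))) *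
          C (ctr 0) := by
  ext n : 1
  simp [coeff_mul_C, coeff_C_mul, betaSeries, ctr_mul_mulLeft_ι, betaF_zero_shiftDown]

theorem IsSigmaMinus.C_ctr_zero_mul_mk {Sm : ℕ → Module.End ℚ ExtV} (hSm : IsSigmaMinus Sm) :
    C (ctr 0) * PowerSeries.mk Sm = PowerSeries.mk Sm * PowerSeries.mk ctr := by
  rw [← sub_eq_zero]
  refine eq_zero_of_mul_C_mulLeft_ι (fun n => ?_) fun v =>
    ⟨PowerSeries.mk fun c => LinearMap.mulLeft ℚ (ExteriorAlgebra.ι ℚ (shiftDown c v)), ?_⟩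
  · rw [map_sub, coeff_C_mul, coeff_mul]
    simp [LinearMap.sum_apply, hSm.1.2, apply_ite, ctr]
  · have hSm_mulLeft := hSm.1.mk_mul_C_mulLeft (ExteriorAlgebra.ι ℚ v)
    simp only [hSm.apply_ι] at hSm_mulLeft
    have hctr₀ := C_ctr_zero_mul_mk_mulLeft_ι_shiftDown v
    have hβ := commute_map_algebraMap (betaSeries v) (PowerSeries.mk Sm)
    generalize PowerSeries.mk (fun c => LinearMap.mulLeft ℚ (ExteriorAlgebra.ι ℚ (shiftDown c v)))
      = Λ at hSm_mulLeft hctr₀ ⊢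
    rw [sub_mul, mul_assoc, hSm_mulLeft, ← mul_assoc, hctr₀, mul_assoc (PowerSeries.mk Sm),
      mk_ctr_mul_C_mulLeft_ι, mul_sub, ← mul_assoc _ (C _), hSm_mulLeft, ← hβ.eq]
    simp only [sub_mul, mul_sub, mul_assoc]
    abel

theorem beta_series_eq_sbarMinus_beta0_sigmaMinus_general
    (Sm Sbm : ℕ → Module.End ℚ ExtV)
    (hSm : IsSigmaMinus Sm) (hSbm : IsSigmaBarMinus Sbm)
    (u : ExtV) :
    (PowerSeries.mk fun m => ctr m u : PowerSeries ExtV)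
    = PowerSeries.mk fun m =>
        ∑ p ∈ Finset.HasAntidiagonal.antidiagonal m, Sbm p.1 (ctr 0 (Sm p.2 u)) := by
  have h : PowerSeries.mk Sbm * C (ctr 0) * PowerSeries.mk Sm = PowerSeries.mk ctr := by
    rw [mul_assoc, hSm.C_ctr_zero_mul_mk, ← mul_assoc, hSbm.mk_mul_mk_eq_one hSm, one_mul]
  ext m
  rw [coeff_mk, coeff_mk, ← coeff_mk m ctr, ← h, coeff_mul, LinearMap.sum_apply]
  simp [coeff_mul_C]

/-- `β(w^{-1}) ⌟ u = σ̄₋(w) (β₀ ⌟ σ₋(w) u)` for `u ∈ ⋀^r V`,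
coefficientwise in the variable `t = w^{-1}`. -/
theorem beta_series_eq_sbarMinus_beta0_sigmaMinus
    (Sm Sbm : ℕ → Module.End ℚ ExtV)
    (hSm : IsSigmaMinus Sm) (hSbm : IsSigmaBarMinus Sbm)
    (r : ℕ) (u : ExtV)
    (hu : u ∈ (LinearMap.range (ExteriorAlgebra.ι ℚ : Vb →ₗ[ℚ] ExtV)) ^ r) :
    (PowerSeries.mk fun m => ctr m u : PowerSeries ExtV)
    = PowerSeries.mk fun m =>
        ∑ p ∈ Finset.HasAntidiagonal.antidiagonal m, Sbm p.1 (ctr 0 (Sm p.2 u)) :=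
  beta_series_eq_sbarMinus_beta0_sigmaMinus_general Sm Sbm hSm hSbm u
end
end

section
/- Contraction against β_0 commutes with σ̄_+(z): for every partition λ with at most r parts, β_0 ⌟ σ̄_+(z)[b]^r_λ = σ̄_+(z)(β_0 ⌟ [b]^r_λ). -/
noncomputable section
open Finset

/-! Both `β₀ ⌟` and every coefficient of `σ̄₊(z)` obey a Leibniz rule for left multiplication
by a basis vector `b_k`: `β₀ ⌟ (b_k x) = δ_{k0} x - b_k (β₀ ⌟ x)`, and `σ̄₊(z)(b_k x)` is
`(b_k - b_{k+1} z) σ̄₊(z) x`. Commuting `β₀ ⌟` past `σ̄₊(z)` on a product of basis vectors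
by induction on the number of factors, the only new term is `b_{k+1} z`, which `β₀ ⌟` sees
only through `δ_{k+1,0} = 0`. -/

lemma ctr_bv_mul (j k : ℕ) (x : ExtV) :
    ctr j (bv k * x) = (if k = j then (1 : ℚ) else 0) • x - bv k * ctr j x := by
  simpa [ctr, bv, betaF, Finsupp.single_apply] using
    CliffordAlgebra.contractLeft_ι_mul (Q := (0 : QuadraticForm ℚ Vb)) (betaF j)
      (Finsupp.single k (1 : ℚ)) x

lemma ctr_one (j : ℕ) : ctr j 1 = 0 :=
  CliffordAlgebra.contractLeft_one _ _

namespace IsSigmaBarPlus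

variable {D : ℕ → Module.End ℚ ExtV}

lemma apply_zero_bv_mul (hD : IsSigmaBarPlus D) (k : ℕ) (x : ExtV) :
    D 0 (bv k * x) = bv k * D 0 x := by
  simp [hD.1.1, hD.2 0 k]

lemma apply_succ_bv_mul (hD : IsSigmaBarPlus D) (m k : ℕ) (x : ExtV) :
    D (m + 1) (bv k * x) = bv k * D (m + 1) x - bv (k + 1) * D m x := by
  rw [hD.1.1, Finset.Nat.sum_antidiagonal_eq_sum_range_succ_mk,
    Finset.sum_range_succ', Finset.sum_range_succ']
  have hvanish : ∀ p ∈ Finset.range m, D (p + 1 + 1) (bv k) * D (m + 1 - (p + 1 + 1)) x = 0 :=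
    fun p _ => by simp [hD.2 (p + 1 + 1) k]
  rw [Finset.sum_eq_zero hvanish]
  simp [hD.2 0 k, hD.2 1 k, sub_eq_add_neg, add_comm]

lemma ctr_zero_comm_prod_bv (hD : IsSigmaBarPlus D) (l : List ℕ) (n : ℕ) :
    ctr 0 (D n (l.map bv).prod) = D n (ctr 0 (l.map bv).prod) := by
  induction l generalizing n with
  | nil =>
    rw [List.map_nil, List.prod_nil, hD.1.2, ctr_one, map_zero]
    split_ifs <;> simp [ctr_one]
  | cons k l ih =>
    rw [List.map_cons, List.prod_cons]
    cases n with
    | zero =>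
      rw [hD.apply_zero_bv_mul, ctr_bv_mul, ctr_bv_mul, map_sub, map_smul,
        hD.apply_zero_bv_mul, ih 0]
    | succ m =>
      have hshift : ctr 0 (bv (k + 1) * D m (l.map bv).prod)
          = -(bv (k + 1) * D m (ctr 0 (l.map bv).prod)) := by
        rw [ctr_bv_mul, if_neg k.succ_ne_zero, zero_smul, zero_sub, ih m]
      rw [hD.apply_succ_bv_mul, map_sub, hshift, ctr_bv_mul, ih (m + 1), ctr_bv_mul,
        map_sub, map_smul, hD.apply_succ_bv_mul]
      abel

end IsSigmaBarPlus

theorem beta0_contraction_commutes_sbarPlus_general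
    (r : ℕ) (lam : Fin r → ℕ)
    (Sbp : ℕ → Module.End ℚ ExtV) (hSbp : IsSigmaBarPlus Sbp) :
    ∀ n : ℕ, ctr 0 (Sbp n (wedgeB r lam)) = Sbp n (ctr 0 (wedgeB r lam)) := by
  have hwedge : wedgeB r lam = ((List.ofFn fun i : Fin r => r - 1 - (i : ℕ) + lam i).map bv).prod := by
    rw [List.map_ofFn]
    rfl
  rw [hwedge]
  exact hSbp.ctr_zero_comm_prod_bv _

/-- contraction against `β₀` commutes with `σ̄₊(z)`:
`β₀ ⌟ σ̄₊(z) [b]^r_λ = σ̄₊(z) (β₀ ⌟ [b]^r_λ)`, coefficientwise in `z`. -/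
theorem beta0_contraction_commutes_sbarPlus
    (r : ℕ) (lam : Fin r → ℕ) (hlam : Antitone lam)
    (Sbp : ℕ → Module.End ℚ ExtV) (hSbp : IsSigmaBarPlus Sbp) :
    ∀ n : ℕ, ctr 0 (Sbp n (wedgeB r lam)) = Sbp n (ctr 0 (wedgeB r lam)) :=
  beta0_contraction_commutes_sbarPlus_general r lam Sbp hSbp
end
end

section
/- For all u ∈ ⋀^r V, β_0 ⌟ σ_-(w) σ̄_+(z) u = (1 − z/w) σ̄_+(z)(β_0 ⌟ σ_-(w) u). -/
/-!
Write `A = σ₋(w)σ̄₊(z)`, `B = σ̄₊(z)σ₋(w)` and `C = σ̄₊(z)(β₀ ⌟ σ₋(w) ·)` as maps from `⋀V` to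
`⋀V[[z]][[t]]`, `t = w⁻¹`. A Hasse–Schmidt derivation is the same as a ring homomorphism
`⋀V → ⋀V[[t]]`, so `A` and `B` are multiplicative, and `β₀ ⌟` is an odd derivation:
`β₀ ⌟ (v y) = β₀(v) y - v (β₀ ⌟ y)` for `v ∈ V`. On a basis vector, `C b_j = t^j` and
`A b_j - B b_j = -z t^(j+1) b₀`. From these, the pair of identities
`A x = B x - z t b₀ C x` and `β₀ ⌟ A x = (1 - z t) C x`
passes from `x` to `b_j x` by a computation that uses only the two product rules, `b₀² = 0`, and
the facts that `b₀` anticommutes with vectors and `C b_j` is central. Every element of `⋀V` is a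
linear combination of products of vectors.
-/

noncomputable section
open Finset

open PowerSeries

theorem interchange_mul_step {S : Type*} [Ring S] {T b Aa Ba Ca Ax Bx Cx : S}
    (hT : ∀ y, Commute T y) (hCa : Commute Ca b) (hBa : Ba * b = -(b * Ba)) (hb : b * b = 0)
    (hQa : Aa = Ba - T * (b * Ca)) (hQx : Ax = Bx - T * (b * Cx)) :
    Aa * Ax = Ba * Bx - T * (b * (Ca * Bx - Ba * Cx)) := by
  have hBa' (y : S) : Ba * (b * y) = -(b * (Ba * y)) := by
    rw [← mul_assoc, hBa, neg_mul, mul_assoc]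
  have hb' (y : S) : b * (b * y) = 0 := by rw [← mul_assoc, hb, zero_mul]
  subst hQa hQx
  simp only [sub_mul, mul_sub, mul_assoc, (hT _).left_comm, hCa.left_comm, hBa', hb']
  abel

theorem interchange_contr_step {S : Type*} [Ring S] {T b Aa Ba Ca Ax Bx Cx dAa dAx : S}
    (hT : ∀ y, Commute T y) (hCa : Commute Ca b)
    (hQa : Aa = Ba - T * (b * Ca)) (hQx : Ax = Bx - T * (b * Cx))
    (hPa : dAa = (1 - T) * Ca) (hPx : dAx = (1 - T) * Cx) :
    dAa * Ax - Aa * dAx = (1 - T) * (Ca * Bx - Ba * Cx) := by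
  subst hQa hQx hPa hPx
  simp only [sub_mul, mul_sub, mul_assoc, one_mul, (hT _).left_comm, hCa.left_comm]
  abel

namespace PowerSeries

variable {R S : Type*}

section Semiring

variable [Semiring R] [Semiring S]

def mapAddHom (f : R →+ S) : R⟦X⟧ →+ S⟦X⟧ where
  toFun φ := mk fun n => f (coeff n φ)
  map_zero' := by ext; simp
  map_add' _ _ := by ext; simp

@[simp]
theorem coeff_mapAddHom (f : R →+ S) (φ : R⟦X⟧) (n : ℕ) :
    coeff n (mapAddHom f φ) = f (coeff n φ) := by
  simp [mapAddHom]

def swap : R⟦X⟧⟦X⟧ →+* R⟦X⟧⟦X⟧ where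
  toFun φ := mk fun n => mk fun m => coeff n (coeff m φ)
  map_one' := by
    ext n m
    by_cases hn : n = 0 <;> by_cases hm : m = 0 <;> simp [coeff_one, hn, hm]
  map_mul' φ ψ := by
    ext n m
    simp only [coeff_mk, coeff_mul, map_sum]
    exact Finset.sum_comm
  map_zero' := by ext; simp
  map_add' _ _ := by ext; simp

@[simp]
theorem coeff_coeff_swap (φ : R⟦X⟧⟦X⟧) (n m : ℕ) :
    coeff m (coeff n (swap φ)) = coeff n (coeff m φ) := by
  simp [swap]

theorem commute_C_X (φ : R⟦X⟧⟦X⟧) : Commute φ (C (X : R⟦X⟧)) := by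
  refine ext fun n => ?_
  rw [coeff_mul_C, coeff_C_mul]
  exact (commute_X (coeff n φ)).eq

theorem coeff_coeff_C_X_pow (n m j : ℕ) :
    coeff m (coeff n (C (X : R⟦X⟧) ^ j)) = if n = 0 ∧ m = j then 1 else 0 := by
  rw [← map_pow, coeff_C]
  split_ifs <;> simp_all [coeff_X_pow]

end Semiring

variable [Ring R]

theorem mapAddHom_mul_of_leibniz {δ : R →+ R} {φ : R⟦X⟧}
    (hφ : ∀ n y, δ (coeff n φ * y) = δ (coeff n φ) * y - coeff n φ * δ y) (ψ : R⟦X⟧) :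
    mapAddHom δ (φ * ψ) = mapAddHom δ φ * ψ - φ * mapAddHom δ ψ := by
  ext n
  simp only [coeff_mapAddHom, coeff_mul, map_sum, hφ, map_sub, Finset.sum_sub_distrib]

theorem mul_C_eq_neg_of_coeff {φ : R⟦X⟧} {c : R} (hφ : ∀ n, coeff n φ * c = -(c * coeff n φ)) :
    φ * C c = -(C c * φ) := by
  ext n
  rw [coeff_mul_C, map_neg, coeff_C_mul, hφ]

end PowerSeries

local notation "⋀¹V" => LinearMap.range (ExteriorAlgebra.ι ℚ : Vb →ₗ[ℚ] ExtV)

theorem bv_mem (j : ℕ) : bv j ∈ ⋀¹V := ⟨_, rfl⟩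

theorem ι_single (j : ℕ) (c : ℚ) : ExteriorAlgebra.ι ℚ (Finsupp.single j c) = c • bv j := by
  rw [bv, ← map_smul, Finsupp.smul_single_one]

theorem mem_of_forall_bv_mem {f : Module.End ℚ ExtV} (hf : ∀ j, f (bv j) ∈ ⋀¹V) {x : ExtV}
    (hx : x ∈ ⋀¹V) : f x ∈ ⋀¹V := by
  obtain ⟨v, rfl⟩ := hx
  induction v using Finsupp.induction_linear with
  | zero => simp
  | add v w hv hw => simpa only [map_add] using add_mem hv hw
  | single j c => simpa only [ι_single, map_smul] using Submodule.smul_mem _ c (hf j)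

theorem ctr_zero_mul_of_mem {x : ExtV} (hx : x ∈ ⋀¹V) (y : ExtV) :
    ctr 0 (x * y) = ctr 0 x * y - x * ctr 0 y := by
  obtain ⟨v, rfl⟩ := hx
  have hι := CliffordAlgebra.contractLeft_ι (Q := (0 : QuadraticForm ℚ Vb)) (betaF 0) v
  have hι_mul := CliffordAlgebra.contractLeft_ι_mul (Q := (0 : QuadraticForm ℚ Vb)) (betaF 0) v y
  rw [Algebra.smul_def, ← hι] at hι_mul
  exact hι_mul

theorem mul_bv_zero_of_mem {x : ExtV} (hx : x ∈ ⋀¹V) : x * bv 0 = -(bv 0 * x) := by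
  obtain ⟨v, rfl⟩ := hx
  exact eq_neg_of_add_eq_zero_left (ExteriorAlgebra.ι_add_mul_swap _ _)

theorem bv_zero_mul_self : bv 0 * bv 0 = 0 := ExteriorAlgebra.ι_sq_zero _

theorem ctr_zero_one : ctr 0 1 = 0 := CliffordAlgebra.contractLeft_one _ _

theorem ctr_zero_bv (j : ℕ) : ctr 0 (bv j) = if j = 0 then 1 else 0 := by
  refine (CliffordAlgebra.contractLeft_ι (Q := 0) (betaF 0) _).trans ?_
  simp [betaF, Finsupp.single_apply]

namespace IsHSFamily

variable {D : ℕ → Module.End ℚ ExtV} (hD : IsHSFamily D)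

def toRingHom : ExtV →+* ExtV⟦X⟧ where
  toFun x := mk fun i => D i x
  map_one' := by ext i; simp [hD.2, coeff_one]
  map_mul' x y := by ext i; simp [hD.1, coeff_mul]
  map_zero' := by ext; simp
  map_add' x y := by ext; simp

@[simp]
theorem coeff_toRingHom (x : ExtV) (i : ℕ) : coeff i (hD.toRingHom x) = D i x := by
  simp [toRingHom]

end IsHSFamily

section Interchange

variable {D E : ℕ → Module.End ℚ ExtV} (hD : IsHSFamily D) (hE : IsHSFamily E)

def seriesComp : ExtV →+* ExtV⟦X⟧⟦X⟧ := (map hE.toRingHom).comp hD.toRingHom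

def seriesCompContr : ExtV →+ ExtV⟦X⟧⟦X⟧ :=
  (map hE.toRingHom).toAddMonoidHom.comp
    ((mapAddHom (ctr 0).toAddMonoidHom).comp hD.toRingHom.toAddMonoidHom)

@[simp]
theorem coeff_coeff_seriesComp (x : ExtV) (n m : ℕ) :
    coeff m (coeff n (seriesComp hD hE x)) = E m (D n x) := by
  simp [seriesComp]

@[simp]
theorem coeff_coeff_seriesCompContr (x : ExtV) (n m : ℕ) :
    coeff m (coeff n (seriesCompContr hD hE x)) = E m (ctr 0 (D n x)) := by
  simp [seriesCompContr]

def ctrSeries₂ : ExtV⟦X⟧⟦X⟧ →+ ExtV⟦X⟧⟦X⟧ := mapAddHom (mapAddHom (ctr 0).toAddMonoidHom)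

@[simp]
theorem coeff_coeff_ctrSeries₂ (φ : ExtV⟦X⟧⟦X⟧) (n m : ℕ) :
    coeff m (coeff n (ctrSeries₂ φ)) = ctr 0 (coeff m (coeff n φ)) := by
  simp [ctrSeries₂]

/-- For `D = σ₋`, `E = σ̄₊` the three series below are `σ₋(w)σ̄₊(z) x`, `σ̄₊(z)σ₋(w) x` and
`σ̄₊(z)(β₀ ⌟ σ₋(w) x)`, with outer variable `z` and inner variable `t = w⁻¹`. -/
def Interchange (x : ExtV) : Prop :=
  seriesComp hE hD x = swap (seriesComp hD hE x)
      - X * C X * (C (C (bv 0)) * swap (seriesCompContr hD hE x)) ∧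
    ctrSeries₂ (seriesComp hE hD x) = (1 - X * C X) * swap (seriesCompContr hD hE x)

end Interchange

namespace Interchange

variable {D E : ℕ → Module.End ℚ ExtV} {hD : IsHSFamily D} {hE : IsHSFamily E}

theorem one : Interchange hD hE 1 := by
  have hC : seriesCompContr hD hE 1 = 0 := by
    ext n m
    simp [hD.2, apply_ite, ctr_zero_one]
  have hA : ctrSeries₂ 1 = 0 := by
    ext n m
    simp [coeff_one, apply_ite, ctr_zero_one]
  simp [Interchange, hC, hA]

theorem add {x y : ExtV} (hx : Interchange hD hE x) (hy : Interchange hD hE y) :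
    Interchange hD hE (x + y) := by
  constructor
  · rw [map_add, hx.1, hy.1, map_add, map_add, map_add, map_add, mul_add, mul_add]; abel
  · rw [map_add, map_add, hx.2, hy.2, map_add, map_add, mul_add]

theorem smul {x : ExtV} (c : ℚ) (hx : Interchange hD hE x) : Interchange hD hE (c • x) := by
  constructor
  · rw [map_rat_smul, hx.1, map_rat_smul, map_rat_smul, map_rat_smul, map_rat_smul, mul_smul_comm,
      mul_smul_comm, smul_sub]
  · rw [map_rat_smul, map_rat_smul, hx.2, map_rat_smul, map_rat_smul, mul_smul_comm]

end Interchange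

theorem ctrSeries₂_mul_of_mem {φ : ExtV⟦X⟧⟦X⟧} (hφ : ∀ n m, coeff m (coeff n φ) ∈ ⋀¹V)
    (ψ : ExtV⟦X⟧⟦X⟧) : ctrSeries₂ (φ * ψ) = ctrSeries₂ φ * ψ - φ * ctrSeries₂ ψ :=
  mapAddHom_mul_of_leibniz
    (fun n _ => mapAddHom_mul_of_leibniz (fun m => ctr_zero_mul_of_mem (hφ n m)) _) ψ

theorem mul_C_C_bv_zero_of_mem {φ : ExtV⟦X⟧⟦X⟧} (hφ : ∀ n m, coeff m (coeff n φ) ∈ ⋀¹V) :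
    φ * C (C (bv 0)) = -(C (C (bv 0)) * φ) :=
  mul_C_eq_neg_of_coeff fun n => mul_C_eq_neg_of_coeff fun m => mul_bv_zero_of_mem (hφ n m)

theorem seriesCompContr_mul_of_mem {D E : ℕ → Module.End ℚ ExtV} (hD : IsHSFamily D)
    (hE : IsHSFamily E) {a : ExtV} (ha : ∀ n, D n a ∈ ⋀¹V) (x : ExtV) :
    seriesCompContr hD hE (a * x)
      = seriesCompContr hD hE a * seriesComp hD hE x
        - seriesComp hD hE a * seriesCompContr hD hE x := by
  simp only [seriesCompContr, seriesComp, AddMonoidHom.comp_apply, RingHom.toAddMonoidHom_eq_coe,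
    AddMonoidHom.coe_coe, RingHom.comp_apply, map_mul]
  rw [mapAddHom_mul_of_leibniz (fun n => ?_), map_sub, map_mul, map_mul]
  simpa using ctr_zero_mul_of_mem (ha n)

theorem IsSigmaMinus.apply_bv_mem {Sm : ℕ → Module.End ℚ ExtV} (hSm : IsSigmaMinus Sm)
    (i j : ℕ) : Sm i (bv j) ∈ ⋀¹V := by
  rw [hSm.2]
  split_ifs
  exacts [bv_mem _, zero_mem _]

theorem IsSigmaBarPlus.apply_bv_mem {Sbp : ℕ → Module.End ℚ ExtV} (hSbp : IsSigmaBarPlus Sbp)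
    (i j : ℕ) : Sbp i (bv j) ∈ ⋀¹V := by
  rw [hSbp.2]
  split_ifs
  exacts [bv_mem _, neg_mem (bv_mem _), zero_mem _]

theorem IsSigmaMinus.ctr_zero_apply_bv {Sm : ℕ → Module.End ℚ ExtV} (hSm : IsSigmaMinus Sm)
    (m j : ℕ) : ctr 0 (Sm m (bv j)) = if m = j then 1 else 0 := by
  rw [hSm.2]
  split_ifs <;> simp [ctr_zero_bv] <;> omega

section SigmaMinusBarPlus

variable {Sm Sbp : ℕ → Module.End ℚ ExtV} (hSm : IsSigmaMinus Sm) (hSbp : IsSigmaBarPlus Sbp)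

theorem swap_seriesCompContr_bv (j : ℕ) :
    swap (seriesCompContr hSm.1 hSbp.1 (bv j)) = C X ^ j := by
  ext n m
  rw [coeff_coeff_swap, coeff_coeff_seriesCompContr, hSm.ctr_zero_apply_bv, coeff_coeff_C_X_pow]
  split_ifs <;> simp_all [hSbp.1.2]

theorem interchange_bv (j : ℕ) : Interchange hSm.1 hSbp.1 (bv j) := by
  rw [Interchange, swap_seriesCompContr_bv hSm hSbp]
  constructor
  · ext n m
    rcases n with _ | _ | n <;> rcases m with _ | m <;>
      simp [-coeff_zero_eq_constantCoeff, mul_assoc, coeff_C_mul, coeff_coeff_C_X_pow,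
        coeff_zero_X_mul, coeff_succ_X_mul, hSm.2, hSbp.2] <;>
      split_ifs <;> simp_all [hSbp.2] <;> (try congr 1) <;> omega
  · ext n m
    rcases n with _ | _ | n <;> rcases m with _ | m <;>
      simp [-coeff_zero_eq_constantCoeff, mul_assoc, sub_mul, coeff_coeff_C_X_pow,
        coeff_zero_X_mul, coeff_succ_X_mul, hSbp.2, hSm.ctr_zero_apply_bv]

theorem Interchange.bv_mul {x : ExtV} (hx : Interchange hSm.1 hSbp.1 x) (j : ℕ) :
    Interchange hSm.1 hSbp.1 (bv j * x) := by
  have hT (y : ExtV⟦X⟧⟦X⟧) : Commute (X * C X) y :=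
    ((commute_X y).symm.mul_left (commute_C_X y).symm)
  have hCa : Commute (swap (seriesCompContr hSm.1 hSbp.1 (bv j))) (C (C (bv 0))) := by
    rw [swap_seriesCompContr_bv hSm hSbp]
    exact ((commute_C_X _).symm.pow_left j)
  have hBa := mul_C_C_bv_zero_of_mem (φ := swap (seriesComp hSm.1 hSbp.1 (bv j))) fun n m => by
    simpa using mem_of_forall_bv_mem (hSbp.apply_bv_mem n) (hSm.apply_bv_mem m j)
  have hb : C (C (bv 0)) * C (C (bv 0)) = (0 : ExtV⟦X⟧⟦X⟧) := by
    rw [← map_mul, ← map_mul, bv_zero_mul_self, map_zero, map_zero]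
  have hC := congrArg swap (seriesCompContr_mul_of_mem hSm.1 hSbp.1 (hSm.apply_bv_mem · j) x)
  rw [map_sub, map_mul swap, map_mul swap] at hC
  have hbv := interchange_bv hSm hSbp j
  constructor
  · rw [map_mul, map_mul, map_mul swap, hC]
    exact interchange_mul_step hT hCa hBa hb hbv.1 hx.1
  · rw [map_mul, ctrSeries₂_mul_of_mem (fun n m => ?_), hC]
    · exact interchange_contr_step hT hCa hbv.1 hx.1 hbv.2 hx.2
    · simpa using mem_of_forall_bv_mem (hSm.apply_bv_mem m) (hSbp.apply_bv_mem n j)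

theorem interchange (u : ExtV) : Interchange hSm.1 hSbp.1 u := by
  suffices h : ∀ x, Interchange hSm.1 hSbp.1 x → Interchange hSm.1 hSbp.1 (u * x) by
    simpa using h 1 Interchange.one
  induction u using ExteriorAlgebra.induction with
  | algebraMap c =>
    intro x hx
    rw [← Algebra.smul_def]
    exact hx.smul c
  | ι v =>
    induction v using Finsupp.induction_linear with
    | zero => intro x hx; simpa using hx.smul 0
    | add v w hv hw => intro x hx; rw [map_add, add_mul]; exact (hv x hx).add (hw x hx)
    | single j c => intro x hx; rw [ι_single, smul_mul_assoc]; exact (hx.bv_mul hSm hSbp j).smul c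
  | mul a b ha hb => intro x hx; rw [mul_assoc]; exact ha _ (hb x hx)
  | add a b ha hb => intro x hx; rw [add_mul]; exact (ha x hx).add (hb x hx)

end SigmaMinusBarPlus

theorem beta0_sigmaMinus_sbarPlus_general
    (Sm Sbp : ℕ → Module.End ℚ ExtV)
    (hSm : IsSigmaMinus Sm) (hSbp : IsSigmaBarPlus Sbp)
    (u : ExtV) :
    (PowerSeries.mk fun n => PowerSeries.mk fun m => ctr 0 (Sm m (Sbp n u))
      : PowerSeries (PowerSeries ExtV))
    = (1 - PowerSeries.X * PowerSeries.C (R := PowerSeries ExtV) PowerSeries.X) *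
        PowerSeries.mk fun n => PowerSeries.mk fun m => Sbp n (ctr 0 (Sm m u)) := by
  have hL : (mk fun n => mk fun m => ctr 0 (Sm m (Sbp n u)) : ExtV⟦X⟧⟦X⟧)
      = ctrSeries₂ (seriesComp hSbp.1 hSm.1 u) := by
    ext n m; simp
  have hR : (mk fun n => mk fun m => Sbp n (ctr 0 (Sm m u)) : ExtV⟦X⟧⟦X⟧)
      = swap (seriesCompContr hSm.1 hSbp.1 u) := by
    ext n m; simp
  rw [hL, hR]
  exact (interchange hSm hSbp u).2

/-- `β₀ ⌟ σ₋(w) σ̄₊(z) u = (1 - z/w) σ̄₊(z) (β₀ ⌟ σ₋(w) u)` for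
`u ∈ ⋀^r V`.  The outer power series variable is `z`, the inner one is `t = w^{-1}`. -/
theorem beta0_sigmaMinus_sbarPlus
    (Sm Sbp : ℕ → Module.End ℚ ExtV)
    (hSm : IsSigmaMinus Sm) (hSbp : IsSigmaBarPlus Sbp)
    (r : ℕ) (u : ExtV)
    (hu : u ∈ (LinearMap.range (ExteriorAlgebra.ι ℚ : Vb →ₗ[ℚ] ExtV)) ^ r) :
    (PowerSeries.mk fun n => PowerSeries.mk fun m => ctr 0 (Sm m (Sbp n u))
      : PowerSeries (PowerSeries ExtV))
    = (1 - PowerSeries.X * PowerSeries.C (R := PowerSeries ExtV) PowerSeries.X) *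
        PowerSeries.mk fun n => PowerSeries.mk fun m => Sbp n (ctr 0 (Sm m u)) :=
  beta0_sigmaMinus_sbarPlus_general Sm Sbp hSm hSbp u
end
end

section
/- For all k ≥ 1, r ≥ 0 and every partition λ with at most r parts: [b]^k_0 ∧ σ̄_+(z_1,...,z_k)[b]^r_λ = e_k(z_1,...,z_k)^r · σ̄_-(z_1,...,z_k)[b]^{r+k}_λ, where [b]^k_0 = b_{k-1} ∧ ⋯ ∧ b_0. -/
noncomputable section
open Finset

/-- `D(z_1)⋯D(z_k)` applied to `u`: the coefficient of `z_1^{d_1}⋯z_k^{d_k}` is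
`D_{d_1} ∘ ⋯ ∘ D_{d_k}` applied to `u`. -/
def multiAct (k : ℕ) (D : ℕ → Module.End ℚ ExtV) (u : ExtV) :
    MvPowerSeries (Fin k) ExtV :=
  fun d => ((List.ofFn fun i : Fin k => D (d i)).prod) u

open scoped Classical

/-!
Write `D(z) = ∑ₙ Dₙ zⁿ`. For `σ̄₊` the Leibniz rule reads
`Dₙ(b_a u) = b_a Dₙ u - b_{a+1} Dₙ₋₁ u`, and for `σ̄₋` the same with `b_{a-1}` (`b_{-1} = 0`);
pushing `D(z₁) ⋯ D(z_k)` past `b_a` therefore gives a signed sum over `ε ∈ {0,1}^k` with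
`b_{a ± |ε|}` in front. Allowing arbitrary integer exponents (negative coefficients being `0`),
induction on the factors of `[b]^r_λ` proves the identity: moving `[b]^k_0` across `b_a` costs
`(-1)^k`, and the two sums match under `ε ↦ 1 - ε`. Finally `σ̄₋` fixes `[b]^k_0`, because
`b_{k-1} ∧ [b]^k_0 = 0`, so it commutes with right multiplication by `[b]^k_0`. Negative
exponents make the left side vanish, so the identity for all integer exponents also shows that
the right side vanishes whenever some `d_i < 0`.
-/

lemma neg_one_pow_sub_of_le {R : Type*} [Monoid R] [HasDistribNeg R] {m k : ℕ} (h : m ≤ k) :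
    (-1 : R) ^ (k - m) = (-1) ^ k * (-1) ^ m := by
  rw [← Nat.sub_add_cancel h, pow_add, Nat.add_sub_cancel, mul_assoc, ← pow_add, ← two_mul,
    pow_mul, neg_one_sq, one_pow, mul_one]

lemma bv_mul_bv_comm (i j : ℕ) : bv i * bv j = -(bv j * bv i) :=
  eq_neg_of_add_eq_zero_left (ExteriorAlgebra.ι_add_mul_swap _ _)

def bvProd (M : List ℕ) : ExtV := (M.map bv).prod

@[simp] lemma bvProd_nil : bvProd [] = 1 := rfl

@[simp] lemma bvProd_cons (a : ℕ) (M : List ℕ) : bvProd (a :: M) = bv a * bvProd M :=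
  List.prod_cons

lemma bvProd_append (M N : List ℕ) : bvProd (M ++ N) = bvProd M * bvProd N := by
  simp [bvProd]

lemma bvProd_mul_bv (M : List ℕ) (m : ℕ) :
    bvProd M * bv m = (-1 : ℚ) ^ M.length • (bv m * bvProd M) := by
  induction M with
  | nil => simp
  | cons a M ih =>
    rw [bvProd_cons, mul_assoc, ih, mul_smul_comm, ← mul_assoc, bv_mul_bv_comm, neg_mul,
      mul_assoc, List.length_cons, pow_succ, mul_neg_one, neg_smul, smul_neg]

def wedgeZero (k : ℕ) : ExtV := bvProd (List.ofFn fun i : Fin k => k - 1 - (i : ℕ))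

lemma wedgeZero_succ (k : ℕ) : wedgeZero (k + 1) = bv k * wedgeZero k := by
  rw [wedgeZero, List.ofFn_succ, bvProd_cons, wedgeZero]
  congr 3
  funext i
  simp only [Fin.val_succ]
  omega

lemma bv_mul_wedgeZero_succ (k : ℕ) : bv k * wedgeZero (k + 1) = 0 := by
  rw [wedgeZero_succ, ← mul_assoc, bv, ExteriorAlgebra.ι_sq_zero, zero_mul]

lemma wedgeZero_mul_bv (k m : ℕ) :
    wedgeZero k * bv m = (-1 : ℚ) ^ k • (bv m * wedgeZero k) := by
  rw [wedgeZero, bvProd_mul_bv, List.length_ofFn]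

section HasseSchmidt

variable {D : ℕ → Module.End ℚ ExtV}

def hsZ (D : ℕ → Module.End ℚ ExtV) (n : ℤ) : Module.End ℚ ExtV :=
  if 0 ≤ n then D n.toNat else 0

@[simp] lemma hsZ_natCast (n : ℕ) : hsZ D n = D n := by simp [hsZ]

lemma hsZ_of_neg {n : ℤ} (hn : n < 0) : hsZ D n = 0 := by simp [hsZ, not_le.2 hn]

lemma IsHSFamily.hsZ_one (hD : IsHSFamily D) (n : ℤ) :
    hsZ D n 1 = if n = 0 then 1 else 0 := by
  rcases lt_or_ge n 0 with hn | hn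
  · simp [hsZ_of_neg hn, hn.ne]
  · lift n to ℕ using hn
    simp [hD.2]

lemma IsHSFamily.hsZ_mul (hD : IsHSFamily D) {x c : ExtV} (h0 : D 0 x = x) (h1 : D 1 x = -c)
    (h2 : ∀ i, 2 ≤ i → D i x = 0) (n : ℤ) (u : ExtV) :
    hsZ D n (x * u) = x * hsZ D n u - c * hsZ D (n - 1) u := by
  rcases lt_or_ge n 0 with hn | hn
  · simp [hsZ_of_neg hn, hsZ_of_neg (show n - 1 < 0 by omega)]
  lift n to ℕ using hn
  rcases n with _ | m
  · rw [hsZ_of_neg (show ((0 : ℕ) : ℤ) - 1 < 0 by norm_num), hsZ_natCast, hD.1,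
      Finset.Nat.antidiagonal_zero, Finset.sum_singleton, h0]
    simp
  · rw [hsZ_natCast, show ((m + 1 : ℕ) : ℤ) - 1 = m by push_cast; ring, hsZ_natCast,
      hD.1, Finset.Nat.sum_antidiagonal_eq_sum_range_succ_mk, Finset.sum_range_succ',
      Finset.sum_range_succ', Finset.sum_eq_zero fun i _ => by
        dsimp only; rw [h2 _ (by omega), zero_mul]]
    simp [h0, h1, sub_eq_add_neg, add_comm]

lemma IsSigmaBarPlus.hsZ_bv_mul (h : IsSigmaBarPlus D) (n : ℤ) (a : ℕ) (u : ExtV) :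
    hsZ D n (bv a * u) = bv a * hsZ D n u - bv (a + 1) * hsZ D (n - 1) u :=
  h.1.hsZ_mul (by simp [h.2]) (by simp [h.2])
    (fun i hi => by rw [h.2, if_neg (by omega), if_neg (by omega)]) n u

lemma IsSigmaBarMinus.hsZ_bv_mul (h : IsSigmaBarMinus D) (n : ℤ) (a : ℕ) (u : ExtV) :
    hsZ D n (bv a * u) = bv a * hsZ D n u - (if a = 0 then 0 else bv (a - 1)) * hsZ D (n - 1) u :=
  h.1.hsZ_mul (by simp [h.2]) (by split_ifs <;> simp [h.2, *])
    (fun i hi => by rw [h.2, if_neg (by omega), if_neg (by omega)]) n u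

end HasseSchmidt

section Composite

variable {D : ℕ → Module.End ℚ ExtV} {k : ℕ}

def hsProd (D : ℕ → Module.End ℚ ExtV) (e : Fin k → ℤ) : Module.End ℚ ExtV :=
  (List.ofFn fun i => hsZ D (e i)).prod

lemma hsProd_zero (e : Fin 0 → ℤ) : hsProd D e = 1 := rfl

lemma hsProd_succ (e : Fin (k + 1) → ℤ) :
    hsProd D e = hsZ D (e 0) * hsProd D (Fin.tail e) := by
  rw [hsProd, List.ofFn_succ, List.prod_cons]
  rfl

lemma hsProd_eq_ite (e : Fin k → ℤ) :
    hsProd D e = if ∀ i, 0 ≤ e i then (List.ofFn fun i => D (e i).toNat).prod else 0 := by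
  split_ifs with he
  · exact congrArg (fun f => (List.ofFn f).prod) (funext fun i => if_pos (he i))
  · simp only [not_forall, not_le] at he
    obtain ⟨i, hi⟩ := he
    exact List.prod_eq_zero (List.mem_ofFn.2 ⟨i, hsZ_of_neg hi⟩)

lemma IsHSFamily.hsProd_one (hD : IsHSFamily D) (e : Fin k → ℤ) :
    hsProd D e 1 = if ∀ i, e i = 0 then 1 else 0 := by
  induction k with
  | zero => simp [hsProd_zero]
  | succ k ih =>
    rw [hsProd_succ, Module.End.mul_apply, ih]
    simp only [Fin.forall_fin_succ (P := fun i => e i = 0), Fin.tail]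
    by_cases he : ∀ i : Fin k, e i.succ = 0
    · simp [he, hD.hsZ_one]
    · simp [he]

def nTrue (ε : Fin k → Bool) : ℕ := ∑ i, (ε i).toNat

lemma nTrue_le (ε : Fin k → Bool) : nTrue ε ≤ k :=
  (Finset.sum_le_sum fun i _ => Bool.toNat_le (ε i)).trans (by simp)

lemma nTrue_cons (b : Bool) (ε : Fin k → Bool) :
    nTrue (Fin.cons b ε : Fin (k + 1) → Bool) = b.toNat + nTrue ε := by
  simp [nTrue, Fin.sum_univ_succ]

lemma nTrue_not (ε : Fin k → Bool) : nTrue (fun i => !ε i) = k - nTrue ε := by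
  have : nTrue (fun i => !ε i) + nTrue ε = k := by
    rw [nTrue, nTrue, ← Finset.sum_add_distrib]
    calc ∑ i, ((!ε i).toNat + (ε i).toNat) = ∑ _i : Fin k, 1 :=
          Finset.sum_congr rfl fun i _ => by cases ε i <;> rfl
      _ = k := by simp
  omega

theorem hsProd_mul_of_step (x : ℕ → ExtV)
    (hx : ∀ j < k, ∀ (n : ℤ) (v : ExtV),
      hsZ D n (x j * v) = x j * hsZ D n v - x (j + 1) * hsZ D (n - 1) v)
    (e : Fin k → ℤ) (u : ExtV) :
    hsProd D e (x 0 * u) = ∑ ε : Fin k → Bool,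
      (-1 : ℚ) ^ nTrue ε • (x (nTrue ε) * hsProd D (fun i => e i - (ε i).toNat) u) := by
  induction k with
  | zero => simp [hsProd_zero, nTrue]
  | succ k ih =>
    rw [hsProd_succ, Module.End.mul_apply, ih (fun j hj => hx j (by omega)), map_sum,
      ← (Fin.consEquiv fun _ => Bool).sum_comp, Fintype.sum_prod_type, Fintype.sum_bool,
      ← Finset.sum_add_distrib]
    refine Finset.sum_congr rfl fun ε _ => ?_
    simp only [Fin.consEquiv, Equiv.coe_fn_mk, nTrue_cons, hsProd_succ, Fin.cons_zero, Fin.tail,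
      Module.End.mul_apply, map_smul, Bool.toNat_true, Bool.toNat_false,
      Nat.cast_one, Nat.cast_zero, sub_zero, zero_add]
    rw [hx _ (by have := nTrue_le ε; omega), add_comm 1, pow_succ, mul_neg_one, neg_smul,
      smul_sub, sub_eq_add_neg, add_comm]
    rfl

end Composite

section SigmaBar

variable {Dp Dm : ℕ → Module.End ℚ ExtV} {k : ℕ}

lemma IsSigmaBarPlus.hsProd_bv_mul (hp : IsSigmaBarPlus Dp) (e : Fin k → ℤ) (a : ℕ)
    (u : ExtV) :
    hsProd Dp e (bv a * u) = ∑ ε : Fin k → Bool,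
      (-1 : ℚ) ^ nTrue ε • (bv (a + nTrue ε) * hsProd Dp (fun i => e i - (ε i).toNat) u) :=
  hsProd_mul_of_step (fun j => bv (a + j)) (fun j _ n v => hp.hsZ_bv_mul n (a + j) v) e u

lemma IsSigmaBarMinus.hsProd_bv_mul (hm : IsSigmaBarMinus Dm) (e : Fin k → ℤ) {a : ℕ}
    (ha : k ≤ a) (u : ExtV) :
    hsProd Dm e (bv a * u) = ∑ ε : Fin k → Bool,
      (-1 : ℚ) ^ nTrue ε • (bv (a - nTrue ε) * hsProd Dm (fun i => e i - (ε i).toNat) u) :=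
  hsProd_mul_of_step (fun j => bv (a - j)) (fun j hj n v => by
    rw [hm.hsZ_bv_mul, if_neg (by omega), Nat.sub_sub]) e u

lemma IsSigmaBarMinus.hsZ_wedgeZero (hm : IsSigmaBarMinus Dm) (j : ℕ) (n : ℤ) :
    hsZ Dm n (wedgeZero j) = if n = 0 then wedgeZero j else 0 := by
  induction j generalizing n with
  | zero => exact hm.1.hsZ_one n
  | succ j ih =>
    rw [wedgeZero_succ, hm.hsZ_bv_mul, ih, ih]
    rcases j with _ | j
    · simp
    · split_ifs <;> simp [bv_mul_wedgeZero_succ]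

lemma IsSigmaBarMinus.apply_mul_wedgeZero (hm : IsSigmaBarMinus Dm) (j n : ℕ) (y : ExtV) :
    Dm n (y * wedgeZero j) = Dm n y * wedgeZero j := by
  have hW (q : ℕ) : Dm q (wedgeZero j) = if q = 0 then wedgeZero j else 0 := by
    simpa using hm.hsZ_wedgeZero j q
  rcases n with _ | n
  · simp [hm.1.1, hW]
  · simp [hm.1.1, Finset.Nat.sum_antidiagonal_succ', hW]

lemma IsSigmaBarMinus.hsProd_mul_wedgeZero (hm : IsSigmaBarMinus Dm) (e : Fin k → ℤ) (j : ℕ)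
    (y : ExtV) : hsProd Dm e (y * wedgeZero j) = hsProd Dm e y * wedgeZero j := by
  have hcomm : Commute (hsProd Dm e) (LinearMap.mulRight ℚ (wedgeZero j)) := by
    refine Commute.list_prod_left _ _ fun f hf => ?_
    obtain ⟨i, rfl⟩ := List.mem_ofFn.1 hf
    refine LinearMap.ext fun y => ?_
    rcases lt_or_ge (e i) 0 with hi | hi
    · simp [hsZ_of_neg hi]
    · lift e i to ℕ using hi with n
      simp [hm.apply_mul_wedgeZero]
  exact LinearMap.congr_fun hcomm.eq y

end SigmaBar

theorem wedgeZero_mul_hsProd_bvProd {Dp Dm : ℕ → Module.End ℚ ExtV} {k : ℕ}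
    (hp : IsSigmaBarPlus Dp) (hm : IsSigmaBarMinus Dm) (L : List ℕ) (e : Fin k → ℤ) :
    wedgeZero k * hsProd Dp e (bvProd L)
      = hsProd Dm (fun i => L.length - e i) (bvProd (L.map (· + k))) * wedgeZero k := by
  induction L generalizing e with
  | nil => simp [hp.1.hsProd_one, hm.1.hsProd_one]
  | cons a L ih =>
    rw [bvProd_cons, hp.hsProd_bv_mul, Finset.mul_sum, List.map_cons, bvProd_cons,
      hm.hsProd_bv_mul _ (Nat.le_add_left k a), Finset.sum_mul]
    refine Fintype.sum_bijective (fun ε i => !ε i)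
      (Function.Involutive.bijective fun ε => by simp) _ _ fun ε => ?_
    have hε := nTrue_le ε
    have hexp : (fun i => (((a :: L).length : ℕ) : ℤ) - e i - (!ε i).toNat)
        = fun i => L.length - (e i - (ε i).toNat) := by
      funext i
      cases ε i <;> simp <;> ring
    rw [mul_smul_comm, ← mul_assoc, wedgeZero_mul_bv, smul_mul_assoc, mul_assoc, ih, nTrue_not,
      show a + k - (k - nTrue ε) = a + nTrue ε by omega, hexp, neg_one_pow_sub_of_le hε,
      smul_smul, smul_mul_assoc, mul_assoc, mul_comm ((-1 : ℚ) ^ k)]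

lemma wedgeB_eq_bvProd (r : ℕ) (lam : Fin r → ℕ) :
    wedgeB r lam = bvProd (List.ofFn fun i : Fin r => r - 1 - (i : ℕ) + lam i) := by
  rw [wedgeB, bvProd, List.map_ofFn]
  rfl

lemma wedgeB_const_zero (k : ℕ) : wedgeB k (fun _ => 0) = wedgeZero k := by
  simp [wedgeB_eq_bvProd, wedgeZero]

lemma wedgeB_extend_zero (r k : ℕ) (lam : Fin r → ℕ) :
    wedgeB (r + k) (fun i => if h : (i : ℕ) < r then lam ⟨i, h⟩ else 0)
      = bvProd ((List.ofFn fun i : Fin r => r - 1 - (i : ℕ) + lam i).map (· + k))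
        * wedgeZero k := by
  rw [wedgeB_eq_bvProd, List.ofFn_add, bvProd_append, wedgeZero, List.map_ofFn]
  congr 3 <;> funext i <;> simp <;> omega

lemma coeff_C_mul_multiAct {k : ℕ} (D : ℕ → Module.End ℚ ExtV) (c u : ExtV)
    (d : Fin k → ℤ) :
    (if ∀ i, 0 ≤ d i then
        MvPowerSeries.coeff (Finsupp.equivFunOnFinite.symm fun i => (d i).toNat)
          (MvPowerSeries.C c * multiAct k D u)
      else 0) = c * hsProd D d u := by
  rw [hsProd_eq_ite]
  split_ifs
  · rw [MvPowerSeries.coeff_C_mul, MvPowerSeries.coeff_apply]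
    simp [multiAct]
  · simp

lemma ite_ofFn_prod_apply {k : ℕ} (D : ℕ → Module.End ℚ ExtV) (r : ℕ) (d : Fin k → ℤ)
    (v : ExtV) :
    (if ∀ i, d i ≤ (r : ℤ) then (List.ofFn fun i => D ((r - d i).toNat)).prod v else 0)
      = hsProd D (fun i => r - d i) v := by
  simp only [hsProd_eq_ite, sub_nonneg]
  split_ifs <;> rfl

-- `σ̄₋_{e_1} ∘ ⋯ ∘ σ̄₋_{e_k}` is the coefficient of `∏ z_i^{-e_i}`; multiplied by
-- `e_k(z)^r = ∏ z_i^r` it lands on `z^d` with `e_i = r - d_i`.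
theorem wedge_sbarPlus_eq_ek_pow_sbarMinus_general
    (k r : ℕ) (lam : Fin r → ℕ)
    (Sbp Sbm : ℕ → Module.End ℚ ExtV)
    (hSbp : IsSigmaBarPlus Sbp) (hSbm : IsSigmaBarMinus Sbm) :
    ∀ d : Fin k → ℤ,
      (if ∀ i, 0 ≤ d i then
          MvPowerSeries.coeff (R := ExtV) (Finsupp.equivFunOnFinite.symm fun i => (d i).toNat)
            ((MvPowerSeries.C (σ := Fin k) (R := ExtV) (wedgeB k fun _ => 0)) *
              multiAct k Sbp (wedgeB r lam))
        else 0)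
      = (if ∀ i, d i ≤ (r : ℤ) then
          ((List.ofFn fun i : Fin k => Sbm ((r - d i).toNat)).prod)
            (wedgeB (r + k) fun i => if h : (i : ℕ) < r then lam ⟨i, h⟩ else 0)
        else 0) := by
  intro d
  rw [coeff_C_mul_multiAct, ite_ofFn_prod_apply, wedgeB_extend_zero, wedgeB_const_zero,
    wedgeB_eq_bvProd, hSbm.hsProd_mul_wedgeZero, wedgeZero_mul_hsProd_bvProd hSbp hSbm,
    List.length_ofFn]

/-- `[b]^k_0 ∧ σ̄₊(z_1,…,z_k)[b]^r_λ = e_k(z)^r ⬝ σ̄₋(z_1,…,z_k)[b]^{r+k}_λ`,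
with `e_k(z) = z_1⋯z_k`.  Both sides are Laurent polynomials in `z_1,…,z_k`; the equality
is stated coefficientwise over all `d : Fin k → ℤ`: the left side is a power series in
the `z_i` (zero coefficient at any negative exponent), while multiplying `σ̄₋` (whose
coefficient at `∏ z_i^{-e_i}` is `σ̄₋_{e_1}∘⋯∘σ̄₋_{e_k}`) by `e_k(z)^r` shifts exponents
by `r` in every variable. -/
theorem wedge_sbarPlus_eq_ek_pow_sbarMinus
    (k r : ℕ) (hk : 1 ≤ k) (lam : Fin r → ℕ) (hlam : Antitone lam)
    (Sbp Sbm : ℕ → Module.End ℚ ExtV)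
    (hSbp : IsSigmaBarPlus Sbp) (hSbm : IsSigmaBarMinus Sbm) :
    ∀ d : Fin k → ℤ,
      (if ∀ i, 0 ≤ d i then
          MvPowerSeries.coeff (R := ExtV) (Finsupp.equivFunOnFinite.symm fun i => (d i).toNat)
            ((MvPowerSeries.C (σ := Fin k) (R := ExtV) (wedgeB k fun _ => 0)) *
              multiAct k Sbp (wedgeB r lam))
        else 0)
      = (if ∀ i, d i ≤ (r : ℤ) then
          ((List.ofFn fun i : Fin k => Sbm ((r - d i).toNat)).prod)
            (wedgeB (r + k) fun i => if h : (i : ℕ) < r then lam ⟨i, h⟩ else 0)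
        else 0) :=
  wedge_sbarPlus_eq_ek_pow_sbarMinus_general k r lam Sbp Sbm hSbp hSbm
end
end
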